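/- arXiv:2107.10418 — 2 statements merged into one kernel-verified Lean document; each statement's English description precedes it below -/
import Mathlib

section
/- The limit as t → ∞ of (∫₀ᵗ ln⁻¹(e+s) ds) / ((1+t) · ln⁻¹(e+t)) equals 1. -/
/-!
With `L s = log (e + s)`, the derivative of `(e + s) / L s` is `1 / L s - 1 / L s ^ 2`, so
`∫₀ᵗ 1 / L = (e + t) / L t - e + ∫₀ᵗ 1 / L ^ 2`. After multiplying by `L t / (1 + t)` the first
two terms tend to `1` and `0`. For the remaining integral, split `[0, r²]` at `r`: the integrand is
at most `1` on `[0, r]` and at most `1 / L r ^ 2` on `[r, r²]`, while `L (r²) ≤ 2 L r`; hence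
the last term is `O(L r / r + 1 / L r)` with `r = √t`, which tends to `0`.
-/

open Real Filter Set intervalIntegral Topology

lemma AntitoneOn.integral_le_two_step {h : ℝ → ℝ} {x₀ a t : ℝ} (hh : AntitoneOn h (Icc x₀ t))
    (hx₀a : x₀ ≤ a) (hat : a ≤ t) :
    ∫ s in x₀..t, h s ≤ (a - x₀) * h x₀ + (t - a) * h a := by
  have hint : ∀ {b c}, x₀ ≤ b → b ≤ c → c ≤ t → IntervalIntegrable h MeasureTheory.volume b c :=
    fun hb hbc hc =>
      (hh.mono (by rw [uIcc_of_le hbc]; exact Icc_subset_Icc hb hc)).intervalIntegrable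
  have hleft : ∫ s in x₀..a, h s ≤ ∫ s in x₀..a, h x₀ :=
    integral_mono_on hx₀a (hint le_rfl hx₀a hat) intervalIntegrable_const fun s hs =>
      hh ⟨le_rfl, hx₀a.trans hat⟩ ⟨hs.1, hs.2.trans hat⟩ hs.1
  have hright : ∫ s in a..t, h s ≤ ∫ s in a..t, h a :=
    integral_mono_on hat (hint hx₀a hat le_rfl) intervalIntegrable_const fun s hs =>
      hh ⟨hx₀a, hat⟩ ⟨hx₀a.trans hs.1, hs.2⟩ hs.1
  rw [← integral_add_adjacent_intervals (hint le_rfl hx₀a hat) (hint hx₀a hat le_rfl)]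
  simp only [integral_const, smul_eq_mul] at hleft hright
  linarith

lemma tendsto_add_div_add_atTop (a b : ℝ) : Tendsto (fun t => (a + t) / (b + t)) atTop (𝓝 1) := by
  have := ((tendsto_atTop_add_const_left atTop b tendsto_id).inv_tendsto_atTop.const_mul
    (a - b)).const_add 1
  rw [mul_zero, add_zero] at this
  refine this.congr' ?_
  filter_upwards [eventually_gt_atTop (-b)] with t ht
  simp only [Pi.inv_apply, id]
  have : b + t ≠ 0 := by linarith
  field_simp
  ring

lemma one_le_log_exp_one_add {s : ℝ} (hs : 0 ≤ s) : 1 ≤ log (exp 1 + s) := by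
  rw [le_log_iff_exp_le (by positivity)]
  linarith

lemma antitoneOn_inv_log_exp_one_add_pow (n : ℕ) :
    AntitoneOn (fun s => (log (exp 1 + s) ^ n)⁻¹) (Ici 0) := by
  intro a ha b _ hab
  have := one_le_log_exp_one_add ha
  dsimp only
  gcongr
  exact add_pos_of_pos_of_nonneg (exp_pos 1) ha

lemma intervalIntegrable_inv_log_exp_one_add_pow (n : ℕ) {a b : ℝ} (ha : 0 ≤ a) (hb : 0 ≤ b) :
    IntervalIntegrable (fun s => (log (exp 1 + s) ^ n)⁻¹) MeasureTheory.volume a b :=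
  ((antitoneOn_inv_log_exp_one_add_pow n).mono fun _ hx =>
    le_trans (le_min ha hb) hx.1).intervalIntegrable

lemma hasDerivAt_exp_one_add_div_log {s : ℝ} (hs : 0 ≤ s) :
    HasDerivAt (fun u => (exp 1 + u) / log (exp 1 + u))
      ((log (exp 1 + s))⁻¹ - (log (exp 1 + s) ^ 2)⁻¹) s := by
  have hpos : 0 < exp 1 + s := by positivity
  have hlog := one_le_log_exp_one_add hs
  have hid : HasDerivAt (fun u => exp 1 + u) 1 s := (hasDerivAt_id s).const_add _
  refine (hid.div (hid.log hpos.ne') (by positivity)).congr_deriv ?_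
  field_simp

lemma integral_inv_log_exp_one_add {t : ℝ} (ht : 0 ≤ t) :
    ∫ s in 0..t, (log (exp 1 + s))⁻¹ =
      (exp 1 + t) / log (exp 1 + t) - exp 1 + ∫ s in 0..t, (log (exp 1 + s) ^ 2)⁻¹ := by
  have hint₁ : IntervalIntegrable (fun s => (log (exp 1 + s))⁻¹) MeasureTheory.volume 0 t := by
    simpa using intervalIntegrable_inv_log_exp_one_add_pow 1 le_rfl ht
  have hint₂ := intervalIntegrable_inv_log_exp_one_add_pow 2 le_rfl ht
  have hftc := integral_eq_sub_of_hasDerivAt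
    (fun s hs => hasDerivAt_exp_one_add_div_log (by rw [uIcc_of_le ht] at hs; exact hs.1))
    (hint₁.sub hint₂)
  rw [integral_sub hint₁ hint₂] at hftc
  simp only [add_zero, log_exp, div_one] at hftc
  linarith

lemma tendsto_log_exp_one_add_atTop : Tendsto (fun t => log (exp 1 + t)) atTop atTop :=
  tendsto_log_atTop.comp (tendsto_atTop_add_const_left _ _ tendsto_id)

lemma tendsto_log_exp_one_add_div_add_atTop (c : ℝ) :
    Tendsto (fun t => log (exp 1 + t) / (c + t)) atTop (𝓝 0) := by
  have := (tendsto_pow_log_div_mul_add_atTop 1 (c - exp 1) 1 one_ne_zero).comp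
    (tendsto_atTop_add_const_left atTop (exp 1) tendsto_id)
  refine this.congr fun t => ?_
  simp only [Function.comp, id, pow_one, one_mul]
  ring_nf

lemma integral_inv_log_sq_mul_log_div_le {r : ℝ} (hr : 1 ≤ r) :
    (∫ s in 0..r ^ 2, (log (exp 1 + s) ^ 2)⁻¹) * log (exp 1 + r ^ 2) / (1 + r ^ 2) ≤
      2 * (log (exp 1 + r) / r + (log (exp 1 + r))⁻¹) := by
  set M := log (exp 1 + r)
  have hM : 1 ≤ M := one_le_log_exp_one_add (by linarith)
  have hI : ∫ s in 0..r ^ 2, (log (exp 1 + s) ^ 2)⁻¹ ≤ r + r ^ 2 * (M ^ 2)⁻¹ := by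
    have := ((antitoneOn_inv_log_exp_one_add_pow 2).mono Icc_subset_Ici_self).integral_le_two_step
      (by linarith) (by nlinarith : r ≤ r ^ 2)
    simp only [add_zero, log_exp, one_pow, inv_one, sub_zero, mul_one] at this
    have : 0 ≤ r * (M ^ 2)⁻¹ := by positivity
    linarith
  have hL : log (exp 1 + r ^ 2) ≤ 2 * M := by
    calc log (exp 1 + r ^ 2) ≤ log ((exp 1 + r) ^ 2) :=
          log_le_log (by positivity) (by nlinarith [exp_pos 1])
      _ = 2 * M := by rw [log_pow, Nat.cast_ofNat]
  calc (∫ s in 0..r ^ 2, (log (exp 1 + s) ^ 2)⁻¹) * log (exp 1 + r ^ 2) / (1 + r ^ 2)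
      ≤ (r + r ^ 2 * (M ^ 2)⁻¹) * (2 * M) / (1 + r ^ 2) := by
        gcongr
        exact (one_le_log_exp_one_add (by positivity)).trans' zero_le_one
    _ ≤ 2 * (M / r + M⁻¹) := by
        rw [div_le_iff₀ (by positivity)]
        field_simp
        nlinarith

lemma tendsto_integral_inv_log_sq_mul_log_div_atTop :
    Tendsto (fun t => (∫ s in 0..t, (log (exp 1 + s) ^ 2)⁻¹) * log (exp 1 + t) / (1 + t))
      atTop (𝓝 0) := by
  have hbound :
      Tendsto (fun r => 2 * (log (exp 1 + r) / r + (log (exp 1 + r))⁻¹)) atTop (𝓝 0) := by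
    simpa using ((tendsto_log_exp_one_add_div_add_atTop 0).add
      tendsto_log_exp_one_add_atTop.inv_tendsto_atTop).const_mul 2
  refine squeeze_zero' ?_ ?_ (hbound.comp tendsto_sqrt_atTop)
  · filter_upwards [eventually_ge_atTop 0] with t ht
    have := one_le_log_exp_one_add ht
    have : 0 ≤ ∫ s in 0..t, (log (exp 1 + s) ^ 2)⁻¹ :=
      integral_nonneg ht fun s _ => by positivity
    positivity
  · filter_upwards [eventually_ge_atTop 1] with t ht
    simpa [sq_sqrt (zero_le_one.trans ht)] using
      integral_inv_log_sq_mul_log_div_le (one_le_sqrt.2 ht)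

theorem stmt_0 :
    Tendsto (fun t : ℝ =>
        (∫ s in (0:ℝ)..t, (Real.log (Real.exp 1 + s))⁻¹) /
          ((1 + t) * (Real.log (Real.exp 1 + t))⁻¹))
      atTop (nhds 1) := by
  have hsum := ((tendsto_add_div_add_atTop (exp 1) 1).sub
    ((tendsto_log_exp_one_add_div_add_atTop 1).const_mul (exp 1))).add
    tendsto_integral_inv_log_sq_mul_log_div_atTop
  rw [mul_zero, sub_zero, add_zero] at hsum
  refine hsum.congr' ?_
  filter_upwards [eventually_ge_atTop 0] with t ht
  have := one_le_log_exp_one_add ht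
  rw [integral_inv_log_exp_one_add ht]
  field_simp
end

section
/- Let E : [0,∞) → [0,∞) be absolutely continuous and satisfy, for some constant C > 0 and all t ≥ 0, E'(t) + C₂/(1+t) · E(t) ≤ C C₂ (1+t)^{-1-β} with 0 < β < C₂ - 1. Then there is a constant C' such that E(t) ≤ C' (1+t)^{-β} for all t ≥ 0. -/
/-!
Multiplying by the integrating factor `(1 + t) ^ C₂` turns the differential inequality into
`((1 + t) ^ C₂ E(t))' ≤ C C₂ (1 + t) ^ (C₂ - β - 1)`, whose right-hand side is the derivative of
`K (1 + t) ^ (C₂ - β)` with `K = C C₂ / (C₂ - β)`. Hence `(1 + t) ^ C₂ E(t) - K (1 + t) ^ (C₂ - β)`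
is antitone, so `E(t) ≤ (E(0) - K) (1 + t) ^ (-C₂) + K (1 + t) ^ (-β)`, and `β < C₂` absorbs the
first term into the second.
-/

open Set

section IntegratingFactor

variable {E E' : ℝ → ℝ} {a c β : ℝ}

lemma hasDerivWithinAt_one_add_rpow_mul {s : Set ℝ} {e t : ℝ} (hE : HasDerivWithinAt E e s t)
    (ht : 0 < 1 + t) :
    HasDerivWithinAt (fun x => (1 + x) ^ a * E x) ((1 + t) ^ a * (e + a / (1 + t) * E t)) s t := by
  have hpow : HasDerivAt (fun x : ℝ => (1 + x) ^ a) (1 * a * (1 + t) ^ (a - 1)) t :=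
    ((hasDerivAt_id t).const_add 1).rpow_const (Or.inl ht.ne')
  refine (hpow.hasDerivWithinAt.mul hE).congr_deriv ?_
  rw [Real.rpow_sub_one ht.ne']
  field_simp
  ring

lemma hasDerivAt_div_sub_mul_one_add_rpow (hβa : β ≠ a) {t : ℝ} (ht : 0 < 1 + t) :
    HasDerivAt (fun x => c / (a - β) * (1 + x) ^ (a - β))
      ((1 + t) ^ a * (c * (1 + t) ^ (-1 - β))) t := by
  have hpow : HasDerivAt (fun x : ℝ => (1 + x) ^ (a - β)) (1 * (a - β) * (1 + t) ^ (a - β - 1)) t :=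
    ((hasDerivAt_id t).const_add 1).rpow_const (Or.inl ht.ne')
  refine (hpow.const_mul (c / (a - β))).congr_deriv ?_
  rw [show a - β - 1 = a + (-1 - β) by ring, Real.rpow_add ht]
  field_simp [sub_ne_zero.mpr hβa.symm]

variable (hE : ∀ t, 0 ≤ t → HasDerivWithinAt E (E' t) (Ici 0) t)
  (hineq : ∀ t, 0 ≤ t → E' t + a / (1 + t) * E t ≤ c * (1 + t) ^ (-1 - β))
include hE hineq

lemma antitoneOn_one_add_rpow_mul_sub (hβa : β ≠ a) :
    AntitoneOn (fun t => (1 + t) ^ a * E t - c / (a - β) * (1 + t) ^ (a - β)) (Ici 0) := by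
  have hderiv : ∀ t, 0 ≤ t → HasDerivWithinAt
      (fun t => (1 + t) ^ a * E t - c / (a - β) * (1 + t) ^ (a - β))
      ((1 + t) ^ a * (E' t + a / (1 + t) * E t - c * (1 + t) ^ (-1 - β))) (Ici 0) t :=
    fun t ht => by
      have hpos : 0 < 1 + t := by linarith
      rw [mul_sub]
      exact (hasDerivWithinAt_one_add_rpow_mul (hE t ht) hpos).sub
        (hasDerivAt_div_sub_mul_one_add_rpow hβa hpos).hasDerivWithinAt
  refine antitoneOn_of_hasDerivWithinAt_nonpos (convex_Ici 0)
    (fun t ht => (hderiv t ht).continuousWithinAt)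
    (fun t ht => (hderiv t (interior_subset ht)).mono interior_subset) (fun t ht => ?_)
  rw [interior_Ici] at ht
  exact mul_nonpos_of_nonneg_of_nonpos (Real.rpow_nonneg (by linarith [mem_Ioi.mp ht]) a)
    (sub_nonpos.mpr (hineq t ht.le))

lemma le_rpow_add_rpow_of_deriv_add_div_le (hβa : β ≠ a) {t : ℝ} (ht : 0 ≤ t) :
    E t ≤ (E 0 - c / (a - β)) * (1 + t) ^ (-a) + c / (a - β) * (1 + t) ^ (-β) := by
  have hpos : 0 < 1 + t := by linarith
  have hG := antitoneOn_one_add_rpow_mul_sub hE hineq hβa self_mem_Ici (mem_Ici.mpr ht) ht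
  simp only [add_zero, Real.one_rpow, one_mul, mul_one] at hG
  have hinv : (1 + t) ^ (-a) * (1 + t) ^ a = 1 := by
    rw [← Real.rpow_add hpos, neg_add_cancel, Real.rpow_zero]
  have hshift : (1 + t) ^ (-a) * (1 + t) ^ (a - β) = (1 + t) ^ (-β) := by
    rw [← Real.rpow_add hpos]; ring_nf
  calc E t = (1 + t) ^ (-a) * ((1 + t) ^ a * E t) := by rw [← mul_assoc, hinv, one_mul]
    _ ≤ (1 + t) ^ (-a) * (E 0 - c / (a - β) + c / (a - β) * (1 + t) ^ (a - β)) := by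
        gcongr; linarith
    _ = _ := by rw [mul_add, mul_left_comm, hshift, mul_comm]

end IntegratingFactor

theorem stmt_13 (E E' : ℝ → ℝ) (C C₂ β : ℝ) (hC : 0 < C) (hβ : 0 < β)
    (hβC₂ : β < C₂ - 1)
    (hE_nonneg : ∀ t, 0 ≤ t → 0 ≤ E t)
    (hE_deriv : ∀ t, 0 ≤ t → HasDerivWithinAt E (E' t) (Set.Ici 0) t)
    (hineq : ∀ t, 0 ≤ t →
      E' t + C₂ / (1 + t) * E t ≤ C * C₂ * (1 + t) ^ (-1 - β)) :
    ∃ C' > 0, ∀ t, 0 ≤ t → E t ≤ C' * (1 + t) ^ (-β) := by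
  have hβC₂' : β < C₂ := by linarith
  have hE₀ : 0 ≤ E 0 := hE_nonneg 0 le_rfl
  set K := C * C₂ / (C₂ - β)
  have hK : 0 < K := div_pos (mul_pos hC (by linarith)) (sub_pos.mpr hβC₂')
  refine ⟨E 0 + K, by linarith, fun t ht => ?_⟩
  have hdecay : (1 + t) ^ (-C₂) ≤ (1 + t) ^ (-β) :=
    Real.rpow_le_rpow_of_exponent_le (by linarith) (neg_le_neg hβC₂'.le)
  calc E t ≤ (E 0 - K) * (1 + t) ^ (-C₂) + K * (1 + t) ^ (-β) :=
        le_rpow_add_rpow_of_deriv_add_div_le hE_deriv hineq hβC₂'.ne ht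
    _ ≤ E 0 * (1 + t) ^ (-β) + K * (1 + t) ^ (-β) := by
        have := (mul_le_mul_of_nonneg_right (sub_le_self _ hK.le) (by positivity)).trans
          (mul_le_mul_of_nonneg_left hdecay hE₀)
        linarith
    _ = (E 0 + K) * (1 + t) ^ (-β) := by ring
end
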